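/- Landauer bound for a confined reservoir: in the Setup, β·(tr(ν_U H_R) − tr(ν_i H_R)) ≥ S(ρ_i) − S(ρ_U), i.e. the energy increase of the reservoir is bounded below by kT times the entropy decrease of the system. -/

import Mathlib

open Matrix Kronecker ComplexOrder

/-- Logarithm of a matrix, defined via the spectral theorem for Hermitian matrices
(junk value `0` on non-Hermitian matrices).  Since `Real.log 0 = 0`, for a positive
semidefinite matrix this is the logarithm taken on the support, with the convention
`log 0 = 0` on the kernel. -/
noncomputable def mlog {n : Type*} [Fintype n] [DecidableEq n] (A : Matrix n n ℂ) :
    Matrix n n ℂ :=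
  if hA : A.IsHermitian then
    (hA.eigenvectorUnitary : Matrix n n ℂ) *
      Matrix.diagonal (fun i => (Real.log (hA.eigenvalues i) : ℂ)) *
      (star hA.eigenvectorUnitary : Matrix n n ℂ)
  else 0

/-- von Neumann entropy `S(ρ) = -tr(ρ log ρ)`. -/
noncomputable def vnEnt {n : Type*} [Fintype n] [DecidableEq n] (ρ : Matrix n n ℂ) : ℝ :=
  -(Matrix.trace (ρ * mlog ρ)).re

/-- Relative entropy `S(ζ₁|ζ₂) = tr(ζ₁ (log ζ₁ - log ζ₂))`. -/
noncomputable def relEnt {n : Type*} [Fintype n] [DecidableEq n] (ζ₁ ζ₂ : Matrix n n ℂ) : ℝ :=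
  (Matrix.trace (ζ₁ * (mlog ζ₁ - mlog ζ₂))).re

/-- A density matrix: positive semidefinite with unit trace. -/
def IsDensityMatrix {n : Type*} [Fintype n] [DecidableEq n] (ρ : Matrix n n ℂ) : Prop :=
  ρ.PosSemidef ∧ ρ.trace = 1

/-- Partial trace over the reservoir (second) factor:
`(tr_R M)_{ij} = Σ_k M_{(i,k),(j,k)}`. -/
noncomputable def ptraceR {dS dR : ℕ} (M : Matrix (Fin dS × Fin dR) (Fin dS × Fin dR) ℂ) :
    Matrix (Fin dS) (Fin dS) ℂ :=
  Matrix.of fun i j => ∑ k, M (i, k) (j, k)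

/-- Partial trace over the system (first) factor:
`(tr_S M)_{kl} = Σ_i M_{(i,k),(i,l)}`. -/
noncomputable def ptraceS {dS dR : ℕ} (M : Matrix (Fin dS × Fin dR) (Fin dS × Fin dR) ℂ) :
    Matrix (Fin dR) (Fin dR) ℂ :=
  Matrix.of fun k l => ∑ i, M (i, k) (i, l)

/-- The Gibbs state `e^{-βH}/tr(e^{-βH})` at inverse temperature `β`. -/
noncomputable def gibbs {dR : ℕ} (β : ℝ) (H : Matrix (Fin dR) (Fin dR) ℂ) :
    Matrix (Fin dR) (Fin dR) ℂ :=
  (Matrix.trace (NormedSpace.exp ((-β : ℂ) • H)))⁻¹ • NormedSpace.exp ((-β : ℂ) • H)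

/-- The square root of a positive semidefinite matrix, as `Matrix.PosSemidef.sqrt` was defined
in the older Mathlib (removed since). -/
noncomputable def Matrix.PosSemidef.sqrt {n : Type*} [Fintype n] [DecidableEq n]
    {A : Matrix n n ℂ} (hA : A.PosSemidef) : Matrix n n ℂ :=
  (hA.1.eigenvectorUnitary : Matrix n n ℂ) *
    Matrix.diagonal ((↑) ∘ (Real.sqrt ·) ∘ hA.1.eigenvalues) *
    (star hA.1.eigenvectorUnitary : Matrix n n ℂ)

/-- The trace norm `‖X‖₁ = tr((X*X)^{1/2})`. -/
noncomputable def traceNorm {n : Type*} [Fintype n] [DecidableEq n] (X : Matrix n n ℂ) : ℝ :=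
  (Matrix.trace (Matrix.posSemidef_conjTranspose_mul_self X).sqrt).re

/-!
Klein's inequality `S(ω‖σ) ≥ tr ω - tr σ` is the scalar inequality `x - y ≤ x log x - x log y`
averaged over the doubly stochastic matrix `|⟨vᵢ, wⱼ⟩|²` of overlaps of eigenvectors of `ω` and `σ`.
Apply it to `ω = ω_U` and `σ = ρ_U ⊗ ν_i`, both of trace one. Since
`log (ρ_U ⊗ ν_i) = log ρ_U ⊗ 1 + 1 ⊗ log ν_i`, the cross term `tr (ω_U log σ)` splits through the
partial traces into `-S(ρ_U) + tr (ν_U log ν_i)`, and `log ν_i = -β H_R - log Z` turns the second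
summand into energy. On the other side, `S(ω_U) = S(ρ_i ⊗ ν_i) = S(ρ_i) + S(ν_i)` by unitary
invariance and additivity, and `S(ν_i) = β tr (ν_i H_R) + log Z`; the `log Z` terms cancel.
-/

theorem Real.sub_le_mul_log_sub_mul_log {x y : ℝ} (hx : 0 < x) (hy : 0 < y) :
    x - y ≤ x * Real.log x - x * Real.log y := by
  have h := mul_le_mul_of_nonneg_left (Real.log_le_sub_one_of_pos (div_pos hy hx)) hx.le
  have hxy : x * (y / x - 1) = y - x := by field_simp
  rw [Real.log_div hy.ne' hx.ne', hxy] at h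
  linarith

section Spectral

variable {n m : Type*} [Fintype n] [DecidableEq n] [Fintype m] [DecidableEq m]

namespace Matrix

theorem conjTranspose_mul_self_of_mem_unitaryGroup {R : Type*} [CommRing R] [StarRing R]
    {V : Matrix n n R} (hV : V ∈ unitaryGroup n R) : Vᴴ * V = 1 :=
  Unitary.star_mul_self_of_mem hV

theorem mul_conjTranspose_self_of_mem_unitaryGroup {R : Type*} [CommRing R] [StarRing R]
    {V : Matrix n n R} (hV : V ∈ unitaryGroup n R) : V * Vᴴ = 1 :=
  Unitary.mul_star_self_of_mem hV

section Intertwining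

variable {R : Type*} [CommRing R] [NoZeroDivisors R]

theorem mul_diagonal_comp_eq_diagonal_comp_mul {S : Matrix n n R} {d e : n → R}
    (h : S * diagonal d = diagonal e * S) (f : R → R) :
    S * diagonal (f ∘ d) = diagonal (f ∘ e) * S := by
  ext i j
  have hij : S i j * d j = e i * S i j := by simpa using congrFun (congrFun h i) j
  rcases eq_or_ne (S i j) 0 with h0 | h0
  · simp [h0]
  · have : d j = e i := mul_left_cancel₀ h0 (by rw [hij, mul_comm])
    simp [this, mul_comm]

variable [StarRing R]

theorem unitary_conj_diagonal_comp_eq {V W : Matrix n n R} (hV : V ∈ unitaryGroup n R)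
    (hW : W ∈ unitaryGroup n R) {d e : n → R} (h : V * diagonal d * Vᴴ = W * diagonal e * Wᴴ)
    (f : R → R) : V * diagonal (f ∘ d) * Vᴴ = W * diagonal (f ∘ e) * Wᴴ := by
  have hVV := conjTranspose_mul_self_of_mem_unitaryGroup hV
  have hWW := conjTranspose_mul_self_of_mem_unitaryGroup hW
  have hWW' := mul_conjTranspose_self_of_mem_unitaryGroup hW
  have hVV' := mul_conjTranspose_self_of_mem_unitaryGroup hV
  -- `Wᴴ V` intertwines the two diagonal forms, hence also their images under `f`
  have hS : (Wᴴ * V) * diagonal d = diagonal e * (Wᴴ * V) := by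
    have := congrArg (fun X => Wᴴ * X * V) h
    simpa only [Matrix.mul_assoc, hVV, hWW, Matrix.mul_one, ← Matrix.mul_assoc Wᴴ W,
      Matrix.one_mul] using this
  have hfS := mul_diagonal_comp_eq_diagonal_comp_mul hS f
  calc V * diagonal (f ∘ d) * Vᴴ = W * ((Wᴴ * V) * diagonal (f ∘ d)) * Vᴴ := by
        simp only [← Matrix.mul_assoc, hWW', Matrix.one_mul]
    _ = W * diagonal (f ∘ e) * Wᴴ := by
        rw [hfS]; simp only [Matrix.mul_assoc, hVV', Matrix.mul_one]

end Intertwining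

theorem trace_unitary_conj {V : Matrix n n ℂ} (hV : V ∈ unitaryGroup n ℂ) (A : Matrix n n ℂ) :
    trace (V * A * Vᴴ) = trace A := by
  rw [trace_mul_comm, ← Matrix.mul_assoc, conjTranspose_mul_self_of_mem_unitaryGroup hV,
    Matrix.one_mul]

theorem PosDef.unitary_conj {A V : Matrix n n ℂ} (hA : A.PosDef) (hV : V ∈ unitaryGroup n ℂ) :
    (V * A * Vᴴ).PosDef :=
  (IsUnit.posDef_star_right_conjugate_iff (Unitary.isUnit_coe (U := ⟨V, hV⟩))).2 hA

theorem PosDef.exists_unitary_conj_diagonal {A : Matrix n n ℂ} (hA : A.PosDef) :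
    ∃ V ∈ unitaryGroup n ℂ, ∃ p : n → ℝ, (∀ i, 0 < p i) ∧
      A = V * diagonal (fun i => (p i : ℂ)) * Vᴴ :=
  ⟨_, hA.1.eigenvectorUnitary.2, _, hA.eigenvalues_pos, hA.1.spectral_theorem⟩

theorem IsHermitian.exists_unitary_conj_diagonal {A : Matrix n n ℂ} (hA : A.IsHermitian) :
    ∃ V ∈ unitaryGroup n ℂ, ∃ d : n → ℝ, A = V * diagonal (fun i => (d i : ℂ)) * Vᴴ :=
  ⟨_, hA.eigenvectorUnitary.2, _, hA.spectral_theorem⟩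

theorem trace_diagonal_mul_conj_diagonal (a b : n → ℂ) (S : Matrix n n ℂ) :
    trace (diagonal a * (S * diagonal b * Sᴴ)) =
      ∑ i, ∑ j, a i * b j * Complex.normSq (S i j) := by
  refine Finset.sum_congr rfl fun i _ => ?_
  rw [diag_apply, diagonal_mul, mul_apply, Finset.mul_sum]
  refine Finset.sum_congr rfl fun j _ => ?_
  rw [mul_diagonal, conjTranspose_apply, Complex.star_def, ← Complex.mul_conj]
  ring

theorem trace_unitary_conj_diagonal_mul {V : Matrix n n ℂ} (hV : V ∈ unitaryGroup n ℂ)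
    (W : Matrix n n ℂ) (a b : n → ℂ) :
    trace (V * diagonal a * Vᴴ * (W * diagonal b * Wᴴ)) =
      ∑ i, ∑ j, a i * b j * Complex.normSq ((Vᴴ * W) i j) := by
  rw [← trace_diagonal_mul_conj_diagonal, ← trace_unitary_conj hV (diagonal a * _)]
  simp only [conjTranspose_mul, conjTranspose_conjTranspose, Matrix.mul_assoc,
    mul_conjTranspose_self_of_mem_unitaryGroup hV, Matrix.mul_one]

theorem map_normSq_mem_doublyStochastic {S : Matrix n n ℂ} (hS : S ∈ unitaryGroup n ℂ) :
    S.map Complex.normSq ∈ doublyStochastic ℝ n := by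
  refine mem_doublyStochastic_iff_sum.2
    ⟨fun _ _ => Complex.normSq_nonneg _, fun i => ?_, fun j => ?_⟩
  · have h := congrFun (congrFun (mul_conjTranspose_self_of_mem_unitaryGroup hS) i) i
    rw [mul_apply, one_apply_eq] at h
    simp only [conjTranspose_apply, Complex.star_def, Complex.mul_conj] at h
    exact_mod_cast h
  · have h := congrFun (congrFun (conjTranspose_mul_self_of_mem_unitaryGroup hS) j) j
    rw [mul_apply, one_apply_eq] at h
    simp only [conjTranspose_apply, Complex.star_def, mul_comm (starRingEnd ℂ _),
      Complex.mul_conj] at h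
    exact_mod_cast h

theorem sum_sub_sum_le_of_mem_doublyStochastic {M : Matrix n n ℝ}
    (hM : M ∈ doublyStochastic ℝ n) {p q : n → ℝ} (hp : ∀ i, 0 < p i) (hq : ∀ j, 0 < q j) :
    ∑ i, p i - ∑ j, q j ≤
      ∑ i, p i * Real.log (p i) - ∑ i, ∑ j, M i j * (p i * Real.log (q j)) :=
  calc ∑ i, p i - ∑ j, q j = ∑ i, ∑ j, M i j * (p i - q j) := by
        simp only [mul_sub, Finset.sum_sub_distrib, ← Finset.sum_mul,
          sum_row_of_mem_doublyStochastic hM, one_mul]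
        rw [Finset.sum_comm (f := fun i j => M i j * q j)]
        simp only [← Finset.sum_mul, sum_col_of_mem_doublyStochastic hM, one_mul]
    _ ≤ ∑ i, ∑ j, M i j * (p i * Real.log (p i) - p i * Real.log (q j)) :=
        Finset.sum_le_sum fun i _ => Finset.sum_le_sum fun j _ =>
          mul_le_mul_of_nonneg_left (Real.sub_le_mul_log_sub_mul_log (hp i) (hq j))
            (nonneg_of_mem_doublyStochastic hM)
    _ = _ := by
        simp only [mul_sub, Finset.sum_sub_distrib, ← Finset.sum_mul,
          sum_row_of_mem_doublyStochastic hM, one_mul]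

end Matrix

theorem mlog_unitary_conj_diagonal {V : Matrix n n ℂ} (hV : V ∈ unitaryGroup n ℂ) (d : n → ℝ) :
    mlog (V * diagonal (fun i => (d i : ℂ)) * Vᴴ) =
      V * diagonal (fun i => (Real.log (d i) : ℂ)) * Vᴴ := by
  have hA : (V * diagonal (fun i => (d i : ℂ)) * Vᴴ).IsHermitian :=
    isHermitian_mul_mul_conjTranspose V (isHermitian_diagonal_of_self_adjoint _ (by ext; simp))
  rw [mlog, dif_pos hA]
  have := unitary_conj_diagonal_comp_eq hA.eigenvectorUnitary.2 hV hA.spectral_theorem.symm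
    (fun z => (Real.log z.re : ℂ))
  simpa [Function.comp_def, star_eq_conjTranspose] using this

theorem mlog_unitary_conj {U M : Matrix n n ℂ} (hU : U ∈ unitaryGroup n ℂ) (hM : M.PosDef) :
    mlog (U * M * Uᴴ) = U * mlog M * Uᴴ := by
  obtain ⟨V, hV, p, -, rfl⟩ := hM.exists_unitary_conj_diagonal
  have hconj : U * (V * diagonal (fun i => (p i : ℂ)) * Vᴴ) * Uᴴ =
      U * V * diagonal (fun i => (p i : ℂ)) * (U * V)ᴴ := by
    simp only [conjTranspose_mul, Matrix.mul_assoc]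
  rw [hconj, mlog_unitary_conj_diagonal (mul_mem hU hV), mlog_unitary_conj_diagonal hV]
  simp only [conjTranspose_mul, Matrix.mul_assoc]

theorem mlog_kronecker {A : Matrix n n ℂ} {B : Matrix m m ℂ} (hA : A.PosDef) (hB : B.PosDef) :
    mlog (A ⊗ₖ B) = mlog A ⊗ₖ (1 : Matrix m m ℂ) + (1 : Matrix n n ℂ) ⊗ₖ mlog B := by
  obtain ⟨V, hV, p, hp, rfl⟩ := hA.exists_unitary_conj_diagonal
  obtain ⟨W, hW, q, hq, rfl⟩ := hB.exists_unitary_conj_diagonal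
  have hVW : V ⊗ₖ W ∈ unitaryGroup (n × m) ℂ := kronecker_mem_unitary hV hW
  have hkron :
      (V * diagonal (fun i => (p i : ℂ)) * Vᴴ) ⊗ₖ (W * diagonal (fun j => (q j : ℂ)) * Wᴴ) =
      (V ⊗ₖ W) * diagonal (fun x : n × m => ((p x.1 * q x.2 : ℝ) : ℂ)) * (V ⊗ₖ W)ᴴ := by
    rw [conjTranspose_kronecker, mul_kronecker_mul, mul_kronecker_mul,
      diagonal_kronecker_diagonal]
    simp only [Complex.ofReal_mul]
  have hlog : diagonal (fun x : n × m => (Real.log (p x.1 * q x.2) : ℂ)) =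
      diagonal (fun i => (Real.log (p i) : ℂ)) ⊗ₖ (1 : Matrix m m ℂ) +
        (1 : Matrix n n ℂ) ⊗ₖ diagonal (fun j => (Real.log (q j) : ℂ)) := by
    rw [← diagonal_one (n := m), ← diagonal_one (n := n), diagonal_kronecker_diagonal,
      diagonal_kronecker_diagonal, diagonal_add]
    congr 1
    funext x
    simp [Real.log_mul (hp x.1).ne' (hq x.2).ne']
  rw [hkron, mlog_unitary_conj_diagonal hVW, mlog_unitary_conj_diagonal hV,
    mlog_unitary_conj_diagonal hW, hlog, conjTranspose_kronecker, Matrix.mul_add, Matrix.add_mul,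
    ← mul_kronecker_mul, ← mul_kronecker_mul, ← mul_kronecker_mul, ← mul_kronecker_mul,
    Matrix.mul_one, Matrix.mul_one, mul_conjTranspose_self_of_mem_unitaryGroup hV,
    mul_conjTranspose_self_of_mem_unitaryGroup hW]

theorem trace_sub_le_relEnt {A B : Matrix n n ℂ} (hA : A.PosDef) (hB : B.PosDef) :
    (A.trace - B.trace).re ≤ relEnt A B := by
  obtain ⟨V, hV, p, hp, rfl⟩ := hA.exists_unitary_conj_diagonal
  obtain ⟨W, hW, q, hq, rfl⟩ := hB.exists_unitary_conj_diagonal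
  have hM : (Vᴴ * W).map Complex.normSq ∈ doublyStochastic ℝ n :=
    map_normSq_mem_doublyStochastic (mul_mem (Unitary.star_mem hV) hW)
  convert sum_sub_sum_le_of_mem_doublyStochastic hM hp hq using 1
  · simp [trace_unitary_conj hV, trace_unitary_conj hW]
  · rw [relEnt, mlog_unitary_conj_diagonal hV, mlog_unitary_conj_diagonal hW, Matrix.mul_sub,
      trace_sub, trace_unitary_conj_diagonal_mul hV, trace_unitary_conj_diagonal_mul hV,
      conjTranspose_mul_self_of_mem_unitaryGroup hV]
    simp [one_apply, Finset.sum_ite_eq, mul_comm, mul_left_comm]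

theorem vnEnt_unitary_conj {U M : Matrix n n ℂ} (hU : U ∈ unitaryGroup n ℂ) (hM : M.PosDef) :
    vnEnt (U * M * Uᴴ) = vnEnt M := by
  rw [vnEnt, vnEnt, mlog_unitary_conj hU hM, ← trace_unitary_conj hU (M * mlog M)]
  simp only [Matrix.mul_assoc, ← Matrix.mul_assoc Uᴴ U,
    conjTranspose_mul_self_of_mem_unitaryGroup hU, Matrix.one_mul]

theorem smul_unitary_conj_diagonal (V : Matrix n n ℂ) (t : ℝ) (d : n → ℝ) :
    (t : ℂ) • (V * diagonal (fun i => (d i : ℂ)) * Vᴴ) =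
      V * diagonal (fun i => ((t * d i : ℝ) : ℂ)) * Vᴴ := by
  have : (fun i => ((t * d i : ℝ) : ℂ)) = (t : ℂ) • fun i => (d i : ℂ) := by ext; simp
  rw [this, diagonal_smul, mul_smul_comm, smul_mul_assoc]

theorem exp_smul_unitary_conj_diagonal {V : Matrix n n ℂ} (hV : V ∈ unitaryGroup n ℂ) (t : ℝ)
    (d : n → ℝ) :
    NormedSpace.exp ((t : ℂ) • (V * diagonal (fun i => (d i : ℂ)) * Vᴴ)) =
      V * diagonal (fun i => (Real.exp (t * d i) : ℂ)) * Vᴴ := by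
  have hinv : V⁻¹ = Vᴴ := inv_eq_left_inv (conjTranspose_mul_self_of_mem_unitaryGroup hV)
  rw [smul_unitary_conj_diagonal, ← hinv, exp_conj _ _ (Unitary.isUnit_coe (U := ⟨V, hV⟩)),
    exp_diagonal]
  congr 3
  funext i
  simp [Complex.ofReal_exp, ← Complex.exp_eq_exp_ℂ]

end Spectral

section PartialTrace

variable {dS dR : ℕ}

theorem trace_ptraceR (M : Matrix (Fin dS × Fin dR) (Fin dS × Fin dR) ℂ) :
    (ptraceR M).trace = M.trace := by
  simp [trace, ptraceR, Fintype.sum_prod_type]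

theorem trace_ptraceS (M : Matrix (Fin dS × Fin dR) (Fin dS × Fin dR) ℂ) :
    (ptraceS M).trace = M.trace := by
  rw [trace, trace, Fintype.sum_prod_type, Finset.sum_comm]
  simp [ptraceS]

theorem ptraceR_kronecker (A : Matrix (Fin dS) (Fin dS) ℂ) (B : Matrix (Fin dR) (Fin dR) ℂ) :
    ptraceR (A ⊗ₖ B) = B.trace • A := by
  ext i j
  simp [ptraceR, trace, ← Finset.mul_sum, mul_comm]

theorem ptraceS_kronecker (A : Matrix (Fin dS) (Fin dS) ℂ) (B : Matrix (Fin dR) (Fin dR) ℂ) :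
    ptraceS (A ⊗ₖ B) = A.trace • B := by
  ext k l
  simp [ptraceS, trace, ← Finset.sum_mul]

theorem trace_mul_kronecker_one (M : Matrix (Fin dS × Fin dR) (Fin dS × Fin dR) ℂ)
    (A : Matrix (Fin dS) (Fin dS) ℂ) :
    (M * (A ⊗ₖ (1 : Matrix (Fin dR) (Fin dR) ℂ))).trace = (ptraceR M * A).trace := by
  simp only [trace, diag_apply, mul_apply, kroneckerMap_apply, one_apply, mul_ite, mul_one,
    mul_zero, Fintype.sum_prod_type, Finset.sum_ite_eq', Finset.mem_univ, ↓reduceIte, ptraceR,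
    of_apply, Finset.sum_mul]
  exact Finset.sum_congr rfl fun i _ => Finset.sum_comm

theorem trace_mul_one_kronecker (M : Matrix (Fin dS × Fin dR) (Fin dS × Fin dR) ℂ)
    (B : Matrix (Fin dR) (Fin dR) ℂ) :
    (M * ((1 : Matrix (Fin dS) (Fin dS) ℂ) ⊗ₖ B)).trace = (ptraceS M * B).trace := by
  simp only [trace, diag_apply, mul_apply, kroneckerMap_apply, one_apply, ite_mul, one_mul,
    zero_mul, mul_ite, mul_zero, Fintype.sum_prod_type, Finset.sum_ite_irrel,
    Finset.sum_const_zero, Finset.sum_ite_eq', Finset.mem_univ, ↓reduceIte, ptraceS, of_apply,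
    Finset.sum_mul]
  rw [Finset.sum_comm]
  exact Finset.sum_congr rfl fun _ _ => Finset.sum_comm

theorem ptraceR_posDef (hdR : 0 < dR) {M : Matrix (Fin dS × Fin dR) (Fin dS × Fin dR) ℂ}
    (hM : M.PosDef) : (ptraceR M).PosDef := by
  refine PosDef.of_dotProduct_mulVec_pos ?_ fun x hx => ?_
  · ext i j
    simp only [conjTranspose_apply, ptraceR, of_apply, star_sum]
    exact Finset.sum_congr rfl fun k _ => by rw [← conjTranspose_apply, hM.1]
  -- `x† (tr_R M) x` is the sum over `k` of `M` evaluated at the product vectors `x ⊗ e_k`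
  set v : Fin dR → Fin dS × Fin dR → ℂ := fun k jl => if jl.2 = k then x jl.1 else 0
  have hsum : star x ⬝ᵥ (ptraceR M *ᵥ x) = ∑ k, star (v k) ⬝ᵥ (M *ᵥ v k) := by
    simp only [dotProduct, Pi.star_apply, RCLike.star_def, mulVec, ptraceR, of_apply,
      Finset.sum_mul, Finset.mul_sum, apply_ite star, star_zero, mul_ite, mul_zero,
      Fintype.sum_prod_type, Finset.sum_ite_eq', Finset.mem_univ, ↓reduceIte, ite_mul, zero_mul,
      Finset.sum_ite_irrel, Finset.sum_const_zero, v]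
    exact (Finset.sum_congr rfl fun _ _ => Finset.sum_comm).trans Finset.sum_comm
  have : Nonempty (Fin dR) := Fin.pos_iff_nonempty.1 hdR
  rw [hsum]
  refine Finset.sum_pos (fun k _ => hM.dotProduct_mulVec_pos fun hv => hx ?_) Finset.univ_nonempty
  ext j
  simpa [v] using congrFun hv (j, k)

section Bipartite

variable {A : Matrix (Fin dS) (Fin dS) ℂ} {B : Matrix (Fin dR) (Fin dR) ℂ}

theorem trace_mul_mlog_kronecker (hA : A.PosDef) (hB : B.PosDef)
    (M : Matrix (Fin dS × Fin dR) (Fin dS × Fin dR) ℂ) :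
    trace (M * mlog (A ⊗ₖ B)) = trace (ptraceR M * mlog A) + trace (ptraceS M * mlog B) := by
  rw [mlog_kronecker hA hB, Matrix.mul_add, trace_add, trace_mul_kronecker_one,
    trace_mul_one_kronecker]

theorem vnEnt_kronecker (hA : A.PosDef) (hB : B.PosDef) (hAtr : A.trace = 1)
    (hBtr : B.trace = 1) : vnEnt (A ⊗ₖ B) = vnEnt A + vnEnt B := by
  rw [vnEnt, trace_mul_mlog_kronecker hA hB, ptraceR_kronecker, ptraceS_kronecker, hAtr, hBtr,
    one_smul, one_smul, Complex.add_re, neg_add, vnEnt, vnEnt]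

end Bipartite

end PartialTrace

section Gibbs

variable {d : ℕ} {H : Matrix (Fin d) (Fin d) ℂ}

theorem trace_exp_neg_smul_unitary_conj_diagonal {V : Matrix (Fin d) (Fin d) ℂ}
    (hV : V ∈ unitaryGroup _ ℂ) (β : ℝ) (l : Fin d → ℝ) :
    trace (NormedSpace.exp ((-β : ℂ) • (V * diagonal (fun k => (l k : ℂ)) * Vᴴ))) =
      ((∑ k, Real.exp (-β * l k) : ℝ) : ℂ) := by
  rw [← Complex.ofReal_neg, exp_smul_unitary_conj_diagonal hV, trace_unitary_conj hV,
    trace_diagonal, Complex.ofReal_sum]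

theorem gibbs_unitary_conj_diagonal {V : Matrix (Fin d) (Fin d) ℂ} (hV : V ∈ unitaryGroup _ ℂ)
    (β : ℝ) (l : Fin d → ℝ) :
    gibbs β (V * diagonal (fun k => (l k : ℂ)) * Vᴴ) =
      V * diagonal (fun k => ((Real.exp (-β * l k) / ∑ j, Real.exp (-β * l j) : ℝ) : ℂ)) * Vᴴ := by
  rw [gibbs, trace_exp_neg_smul_unitary_conj_diagonal hV, ← Complex.ofReal_neg,
    exp_smul_unitary_conj_diagonal hV, ← Complex.ofReal_inv, smul_unitary_conj_diagonal]
  simp [div_eq_inv_mul]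

theorem gibbs_posDef (hH : H.IsHermitian) (β : ℝ) : (gibbs β H).PosDef := by
  obtain ⟨V, hV, l, rfl⟩ := hH.exists_unitary_conj_diagonal
  rw [gibbs_unitary_conj_diagonal hV β l]
  refine PosDef.unitary_conj (posDef_diagonal_iff.2 fun k => ?_) hV
  have hZ := Finset.sum_pos (fun j _ => Real.exp_pos (-β * l j)) ⟨k, Finset.mem_univ k⟩
  exact_mod_cast div_pos (Real.exp_pos _) hZ

theorem trace_gibbs (hd : 0 < d) (hH : H.IsHermitian) (β : ℝ) : (gibbs β H).trace = 1 := by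
  obtain ⟨V, hV, l, rfl⟩ := hH.exists_unitary_conj_diagonal
  have : Nonempty (Fin d) := Fin.pos_iff_nonempty.1 hd
  have hZ : 0 < ∑ j, Real.exp (-β * l j) :=
    Finset.sum_pos (fun j _ => Real.exp_pos _) Finset.univ_nonempty
  rw [gibbs_unitary_conj_diagonal hV β l, trace_unitary_conj hV, trace_diagonal]
  exact_mod_cast by rw [← Finset.sum_div, div_self hZ.ne']

theorem mlog_gibbs (hH : H.IsHermitian) (β : ℝ) :
    mlog (gibbs β H) =
      -(β : ℂ) • H - (Real.log (trace (NormedSpace.exp ((-β : ℂ) • H))).re : ℂ) • 1 := by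
  obtain ⟨V, hV, l, rfl⟩ := hH.exists_unitary_conj_diagonal
  rw [gibbs_unitary_conj_diagonal hV, trace_exp_neg_smul_unitary_conj_diagonal hV,
    Complex.ofReal_re, mlog_unitary_conj_diagonal hV]
  set Z := ∑ j, Real.exp (-β * l j)
  have hlog : ∀ k, Real.log (Real.exp (-β * l k) / Z) = -β * l k - Real.log Z := fun k => by
    have hZpos : 0 < Z := Finset.sum_pos (fun j _ => Real.exp_pos _) ⟨k, Finset.mem_univ k⟩
    rw [Real.log_div (Real.exp_pos _).ne' hZpos.ne', Real.log_exp]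
  have hconst : (Real.log Z : ℂ) • (1 : Matrix (Fin d) (Fin d) ℂ) =
      V * diagonal (fun _ => (Real.log Z : ℂ)) * Vᴴ := by
    rw [← smul_one_eq_diagonal, mul_smul_comm, Matrix.mul_one, smul_mul_assoc,
      mul_conjTranspose_self_of_mem_unitaryGroup hV]
  rw [hconst, ← Complex.ofReal_neg,
    smul_unitary_conj_diagonal, ← Matrix.sub_mul, ← Matrix.mul_sub, diagonal_sub]
  simp only [hlog, Complex.ofReal_sub]

end Gibbs

theorem landauer_bound_confined_general {dS dR : ℕ} (hdR : 0 < dR)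
    (β : ℝ)
    (HR : Matrix (Fin dR) (Fin dR) ℂ) (hHR : HR.IsHermitian)
    (ρi : Matrix (Fin dS) (Fin dS) ℂ) (hρi : ρi.PosDef) (hρitr : ρi.trace = 1)
    (U : Matrix (Fin dS × Fin dR) (Fin dS × Fin dR) ℂ)
    (hU : U ∈ Matrix.unitaryGroup (Fin dS × Fin dR) ℂ) :
    let νi := gibbs β HR
    let ωU := U * (ρi ⊗ₖ νi) * Uᴴ
    let ρU := ptraceR ωU
    let νU := ptraceS ωU
    vnEnt ρi - vnEnt ρU
      ≤ β * ((Matrix.trace (νU * HR)).re - (Matrix.trace (νi * HR)).re) := by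
  intro νi ωU ρU νU
  have hνi : νi.PosDef := gibbs_posDef hHR β
  have hνitr : νi.trace = 1 := trace_gibbs hdR hHR β
  have hωi : (ρi ⊗ₖ νi).PosDef := hρi.kronecker hνi
  have hωU : ωU.PosDef := hωi.unitary_conj hU
  have hωUtr : ωU.trace = 1 := by
    rw [trace_unitary_conj hU, trace_kronecker, hρitr, hνitr, one_mul]
  have hρU : ρU.PosDef := ptraceR_posDef hdR hωU
  have hρUtr : ρU.trace = 1 := (trace_ptraceR ωU).trans hωUtr
  have hνUtr : νU.trace = 1 := (trace_ptraceS ωU).trans hωUtr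
  have hklein : 0 ≤ relEnt ωU (ρU ⊗ₖ νi) := by
    simpa [hωUtr, trace_kronecker, hρUtr, hνitr] using trace_sub_le_relEnt hωU (hρU.kronecker hνi)
  have hrel : relEnt ωU (ρU ⊗ₖ νi) =
      -vnEnt ωU - (trace (ρU * mlog ρU)).re - (trace (νU * mlog νi)).re := by
    rw [relEnt, Matrix.mul_sub, trace_sub, trace_mul_mlog_kronecker hρU hνi, vnEnt, Complex.sub_re,
      Complex.add_re]
    ring
  have hωent : vnEnt ωU = vnEnt ρi + vnEnt νi :=
    (vnEnt_unitary_conj hU hωi).trans (vnEnt_kronecker hρi hνi hρitr hνitr)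
  have hlogν : ∀ ν : Matrix (Fin dR) (Fin dR) ℂ, ν.trace = 1 →
      (trace (ν * mlog νi)).re = -β * (trace (ν * HR)).re -
        Real.log (trace (NormedSpace.exp ((-β : ℂ) • HR))).re := fun ν hν => by
    simp [νi, mlog_gibbs hHR, Matrix.mul_sub, hν]
  rw [hrel, hωent] at hklein
  simp only [vnEnt] at hklein ⊢
  linarith [hlogν νi hνitr, hlogν νU hνUtr]

/-- **Landauer bound for a confined reservoir.**
`β (tr(ν_U H_R) - tr(ν_i H_R)) ≥ S(ρ_i) - S(ρ_U)`: the energy increase of the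
reservoir is bounded below by `kT` times the entropy decrease of the system. -/
theorem landauer_bound_confined {dS dR : ℕ} (hdR : 0 < dR)
    (β : ℝ) (hβ : 0 < β)
    (HR : Matrix (Fin dR) (Fin dR) ℂ) (hHR : HR.IsHermitian)
    (ρi : Matrix (Fin dS) (Fin dS) ℂ) (hρi : ρi.PosDef) (hρitr : ρi.trace = 1)
    (U : Matrix (Fin dS × Fin dR) (Fin dS × Fin dR) ℂ)
    (hU : U ∈ Matrix.unitaryGroup (Fin dS × Fin dR) ℂ) :
    let νi := gibbs β HR
    let ωU := U * (ρi ⊗ₖ νi) * Uᴴ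
    let ρU := ptraceR ωU
    let νU := ptraceS ωU
    vnEnt ρi - vnEnt ρU
      ≤ β * ((Matrix.trace (νU * HR)).re - (Matrix.trace (νi * HR)).re) :=
  landauer_bound_confined_general hdR β HR hHR ρi hρi hρitr U hU
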